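/- Let X be a solution of the inviscid dyadic model on [0,T) and let 0 ≤ s ≤ t < T. If X(s) ∈ H_+, i.e. X_n(s) < 0 for at most finitely many n, then X(t) ∈ H_+; in other words, the set H_+ is invariant under the flow of the dyadic model. -/

import Mathlib

/-
Each component obeys `X_n' = k_{n-1} X_{n-1}^2 - (k_n X_{n+1}) X_n ≥ -(k_n X_{n+1}) X_n`, because
`k_{n-1} ≥ 0`. With the integrating factor `exp (∫ k_n X_{n+1})` the product `X_n · exp (∫ k_n X_{n+1})`
is nondecreasing, so a component that is nonnegative at time `s` stays nonnegative afterwards.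
Hence the negative components at time `t` are among the finitely many negative ones at time `s`.
-/

open MeasureTheory Set Filter Topology

/-- `X` is a solution of the inviscid dyadic model on the time set `D`
(typically `Set.Ico 0 T` or `Set.Ici 0`), with coefficients `k` bounded by `C * 2 ^ n`.
The components of the solution are `X 1, X 2, ...`; by convention `X 0 ≡ 0` and `k 0 = 0`. -/
def IsDyadicSolutionOn (C : ℝ) (k : ℕ → ℝ) (X : ℕ → ℝ → ℝ) (D : Set ℝ) : Prop :=
  0 < C ∧ k 0 = 0 ∧
  (∀ n : ℕ, 1 ≤ n → 0 ≤ k n ∧ k n ≤ C * 2 ^ n) ∧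
  (∀ t : ℝ, X 0 t = 0) ∧
  (∀ n : ℕ, 1 ≤ n → ∀ t ∈ D, HasDerivWithinAt (X n)
      (k (n - 1) * X (n - 1) t ^ 2 - k n * X n t * X (n + 1) t) D t) ∧
  (∀ t ∈ D, Summable fun j : ℕ => X (j + 1) t ^ 2)

/-- The energy `E(t) = ∑_{j ≥ 1} X_j(t)^2`. -/
noncomputable def energy (X : ℕ → ℝ → ℝ) (t : ℝ) : ℝ :=
  ∑' j : ℕ, X (j + 1) t ^ 2

/-- The function `a(t) = sup_{n ≥ 1} (- k_n X_{n+1}(t))`. -/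
noncomputable def classKfun (k : ℕ → ℝ) (X : ℕ → ℝ → ℝ) (t : ℝ) : ℝ :=
  ⨆ n : ℕ, -(k (n + 1) * X (n + 2) t)

/-- A solution is of class `K` if `a(t) = sup_{n ≥ 1} (- k_n X_{n+1}(t))` is locally
integrable on `[0,∞)`. -/
def IsClassK (k : ℕ → ℝ) (X : ℕ → ℝ → ℝ) : Prop :=
  LocallyIntegrableOn (classKfun k X) (Set.Ici 0)

theorem nonneg_of_neg_mul_le_deriv {x x' b : ℝ → ℝ} {s t : ℝ} (hst : s ≤ t)
    (hx : ContinuousOn x (Icc s t)) (hb : ContinuousOn b (Icc s t))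
    (hderiv : ∀ u ∈ Ioo s t, HasDerivAt x (x' u) u)
    (hle : ∀ u ∈ Ioo s t, -(b u * x u) ≤ x' u) (hxs : 0 ≤ x s) : 0 ≤ x t := by
  set F : ℝ → ℝ := fun u => ∫ v in s..u, b v
  have hF_cont : ContinuousOn F (Icc s t) := by
    simpa [uIcc_of_le hst] using
      intervalIntegral.continuousOn_primitive_interval (μ := volume) (a := s) (b := t)
        (by simpa [uIcc_of_le hst] using hb.integrableOn_Icc)
  have hF_deriv : ∀ u ∈ Ioo s t, HasDerivAt F (b u) u := fun u hu =>
    intervalIntegral.integral_hasDerivAt_right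
      ((hb.mono (Icc_subset_Icc_right hu.2.le)).intervalIntegrable_of_Icc hu.1.le)
      ((hb.mono Ioo_subset_Icc_self).stronglyMeasurableAtFilter isOpen_Ioo u hu)
      (hb.continuousAt (Icc_mem_nhds hu.1 hu.2))
  set g : ℝ → ℝ := fun u => x u * Real.exp (F u)
  have hg_mono : MonotoneOn g (Icc s t) := by
    refine monotoneOn_of_hasDerivWithinAt_nonneg (f' := fun u => (x' u + b u * x u) *
      Real.exp (F u)) (convex_Icc s t) (hx.mul (Real.continuous_exp.comp_continuousOn hF_cont))
      (fun u hu => ?_) (fun u hu => ?_)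
    · rw [interior_Icc] at hu
      exact (((hderiv u hu).mul (hF_deriv u hu).exp).congr_deriv (by ring)).hasDerivWithinAt
    · rw [interior_Icc] at hu
      exact mul_nonneg (by linarith [hle u hu]) (Real.exp_pos _).le
  have hgt : 0 ≤ g t := (mul_nonneg hxs (Real.exp_pos _).le).trans
    (hg_mono (left_mem_Icc.2 hst) (right_mem_Icc.2 hst) hst)
  exact nonneg_of_mul_nonneg_left hgt (Real.exp_pos _)

namespace IsDyadicSolutionOn

variable {C : ℝ} {k : ℕ → ℝ} {X : ℕ → ℝ → ℝ} {T : ℝ}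

theorem coeff_nonneg {D : Set ℝ} (hX : IsDyadicSolutionOn C k X D) (n : ℕ) : 0 ≤ k n := by
  rcases Nat.eq_zero_or_pos n with rfl | hn
  · exact hX.2.1.ge
  · exact (hX.2.2.1 n hn).1

theorem continuousOn {D : Set ℝ} (hX : IsDyadicSolutionOn C k X D) (n : ℕ) :
    ContinuousOn (X n) D := by
  rcases Nat.eq_zero_or_pos n with rfl | hn
  · exact continuousOn_const.congr fun u _ => hX.2.2.2.1 u
  · exact fun u hu => (hX.2.2.2.2.1 n hn u hu).continuousWithinAt

theorem hasDerivAt (hX : IsDyadicSolutionOn C k X (Ico 0 T)) {n : ℕ} (hn : 1 ≤ n) {u : ℝ}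
    (hu : u ∈ Ioo 0 T) :
    HasDerivAt (X n) (k (n - 1) * X (n - 1) u ^ 2 - k n * X n u * X (n + 1) u) u :=
  (hX.2.2.2.2.1 n hn u (Ioo_subset_Ico_self hu)).hasDerivAt
    (mem_of_superset (Ioo_mem_nhds hu.1 hu.2) Ioo_subset_Ico_self)

theorem nonneg_of_nonneg (hX : IsDyadicSolutionOn C k X (Ico 0 T)) {s t : ℝ} (hs : 0 ≤ s)
    (hst : s ≤ t) (ht : t < T) (n : ℕ) (hXs : 0 ≤ X n s) : 0 ≤ X n t := by
  rcases Nat.eq_zero_or_pos n with rfl | hn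
  · exact (hX.2.2.2.1 t).ge
  have hsub : Icc s t ⊆ Ico 0 T := fun u hu => ⟨hs.trans hu.1, hu.2.trans_lt ht⟩
  refine nonneg_of_neg_mul_le_deriv (b := fun u => k n * X (n + 1) u) hst
    ((hX.continuousOn n).mono hsub) (((hX.continuousOn (n + 1)).mono hsub).const_smul (k n))
    (fun u hu => hX.hasDerivAt hn ⟨hs.trans_lt hu.1, hu.2.trans ht⟩) (fun u _ => ?_) hXs
  nlinarith [hX.coeff_nonneg (n - 1), sq_nonneg (X (n - 1) u)]

end IsDyadicSolutionOn

/-- the set `H₊` of sequences with at most finitely many negative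
components is invariant under the flow of the dyadic model. -/
theorem Hplus_invariant
    (C : ℝ) (k : ℕ → ℝ) (X : ℕ → ℝ → ℝ) (T : ℝ)
    (hX : IsDyadicSolutionOn C k X (Set.Ico 0 T))
    (s t : ℝ) (hs : 0 ≤ s) (hst : s ≤ t) (ht : t < T)
    (hfin : {n : ℕ | X n s < 0}.Finite) :
    {n : ℕ | X n t < 0}.Finite :=
  hfin.subset fun n hn => not_le.1 fun hXs => not_le.2 hn (hX.nonneg_of_nonneg hs hst ht n hXs)
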